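/- arXiv:2502.04437 — 2 statements merged into one kernel-verified Lean document; each statement's English description precedes it below -/
import Mathlib

section
/- For two unit vectors ψ and φ in a complex Hilbert space, the nonzero eigenvalues of the operator |ψ⟩⟨ψ| − |φ⟩⟨φ| are exactly ±sin θ, where cos θ = |⟨ψ|φ⟩|. In particular, the operator norm of |ψ⟩⟨ψ| − |φ⟩⟨φ| equals sin θ. -/
/-!
Write `T = |ψ⟩⟨ψ| - |φ⟩⟨φ|`. Pairing `T x = μ • x` with `ψ` and `φ` gives a 2×2 linear system for
`(⟪ψ, x⟫, ⟪φ, x⟫)`; for `μ ≠ 0` these cannot both vanish, so its determinant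
`μ ^ 2 - (1 - ‖⟪ψ, φ⟫‖ ^ 2)` does, and `1 - ‖⟪ψ, φ⟫‖ ^ 2 = sin θ ^ 2`. Conversely, explicit
vectors in `span {ψ, φ}` realise both roots. As `T` is self-adjoint and of finite rank, its norm
is its spectral radius.
-/

open scoped InnerProductSpace ENNReal
open Module End InnerProductSpace

variable {𝕜 E : Type*} [RCLike 𝕜] [NormedAddCommGroup E] [InnerProductSpace 𝕜 E]

theorem inner_swap_mul_inner (x y : E) : ⟪y, x⟫_𝕜 * ⟪x, y⟫_𝕜 = (‖⟪x, y⟫_𝕜‖ : 𝕜) ^ 2 := by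
  rw [← inner_conj_symm, RCLike.conj_mul]

theorem ContinuousLinearMap.norm_eq_of_hasEigenvalue_iff [CompleteSpace E] {T : E →L[𝕜] E}
    (hc : IsCompactOperator T) (hT : IsSelfAdjoint T) {s : ℝ} (hs : 0 ≤ s)
    (h : ∀ μ : 𝕜, μ ≠ 0 → (HasEigenvalue (T : End 𝕜 E) μ ↔ μ = s ∨ μ = -s)) : ‖T‖ = s := by
  have hmem (μ : 𝕜) (hμ : μ ≠ 0) : μ ∈ spectrum 𝕜 T ↔ μ = s ∨ μ = -s :=
    (hc.hasEigenvalue_iff_mem_spectrum hμ).symm.trans (h μ hμ)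
  suffices spectralRadius 𝕜 T = ‖(s : 𝕜)‖₊ by
    rw [T.spectralRadius_eq_nnnorm hT, ENNReal.coe_inj] at this
    simpa [abs_of_nonneg hs] using congrArg NNReal.toReal this
  apply le_antisymm
  · refine iSup₂_le fun μ hμ ↦ ?_
    rcases eq_or_ne μ 0 with rfl | hμ0
    · simp
    · rcases (hmem μ hμ0).1 hμ with rfl | rfl <;> simp
  · rcases eq_or_ne (s : 𝕜) 0 with hs0 | hs0
    · simp [hs0]
    · exact le_iSup₂ (f := fun μ (_ : μ ∈ spectrum 𝕜 T) ↦ (‖μ‖₊ : ℝ≥0∞)) _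
        ((hmem _ hs0).2 (.inl rfl))

namespace InnerProductSpace

theorem isCompactOperator_rankOne {F : Type*} [NormedAddCommGroup F] [InnerProductSpace 𝕜 F]
    (x : F) (y : E) : IsCompactOperator (rankOne 𝕜 x y) :=
  (isCompactOperator_of_locallyCompactSpace_dom (innerSL 𝕜 y)).clm_comp (.toSpanSingleton 𝕜 x)

variable {ψ φ : E}

theorem sq_eq_of_hasEigenvector_rankOne_sub_rankOne (hψ : ‖ψ‖ = 1) (hφ : ‖φ‖ = 1) {μ : 𝕜} {x : E}
    (hx : HasEigenvector ((rankOne 𝕜 ψ ψ - rankOne 𝕜 φ φ : E →L[𝕜] E) : End 𝕜 E) μ x)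
    (hμ : μ ≠ 0) : μ ^ 2 = 1 - (‖⟪ψ, φ⟫_𝕜‖ : 𝕜) ^ 2 := by
  set p := ⟪ψ, x⟫_𝕜
  set q := ⟪φ, x⟫_𝕜
  have hTx : p • ψ - q • φ = μ • x := by simpa using hx.apply_eq_smul
  have hψx : p - ⟪ψ, φ⟫_𝕜 * q = μ * p := by
    simpa [inner_sub_right, inner_smul_right, hψ, mul_comm] using congrArg (⟪ψ, ·⟫_𝕜) hTx
  have hφx : ⟪φ, ψ⟫_𝕜 * p - q = μ * q := by
    simpa [inner_sub_right, inner_smul_right, hφ, mul_comm] using congrArg (⟪φ, ·⟫_𝕜) hTx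
  have hg := inner_swap_mul_inner (𝕜 := 𝕜) ψ φ
  by_contra hμ2
  have hμ2 := sub_ne_zero.2 hμ2
  have hp : p = 0 := by
    refine (mul_eq_zero.1 ?_).resolve_left hμ2
    linear_combination ⟪ψ, φ⟫_𝕜 * hφx - (1 + μ) * hψx - p * hg
  have hq : q = 0 := by
    refine (mul_eq_zero.1 ?_).resolve_left hμ2
    linear_combination -⟪φ, ψ⟫_𝕜 * hψx + (1 - μ) * hφx - q * hg
  have hμx : μ • x = 0 := by rw [← hTx, hp, hq]; simp
  exact hx.2 ((smul_eq_zero.1 hμx).resolve_left hμ)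

theorem hasEigenvector_rankOne_sub_rankOne_of_ne_neg_one (hψ : ‖ψ‖ = 1) (hφ : ‖φ‖ = 1) {μ : 𝕜}
    (hμ : μ ≠ 0) (hμ1 : μ ≠ -1) (h : μ ^ 2 = 1 - (‖⟪ψ, φ⟫_𝕜‖ : 𝕜) ^ 2) :
    HasEigenvector ((rankOne 𝕜 ψ ψ - rankOne 𝕜 φ φ : E →L[𝕜] E) : End 𝕜 E) μ
      ((μ + 1) • ψ - ⟪φ, ψ⟫_𝕜 • φ) := by
  have hψx : ⟪ψ, (μ + 1) • ψ - ⟪φ, ψ⟫_𝕜 • φ⟫_𝕜 = μ * (μ + 1) := by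
    simp only [inner_sub_right, inner_smul_right, inner_self_eq_one_of_norm_eq_one hψ]
    linear_combination -inner_swap_mul_inner (𝕜 := 𝕜) ψ φ - h
  have hφx : ⟪φ, (μ + 1) • ψ - ⟪φ, ψ⟫_𝕜 • φ⟫_𝕜 = μ * ⟪φ, ψ⟫_𝕜 := by
    simp only [inner_sub_right, inner_smul_right, inner_self_eq_one_of_norm_eq_one hφ]
    ring
  refine hasEigenvector_iff.2 ⟨mem_eigenspace_iff.2 ?_, fun h0 ↦ ?_⟩
  · simp only [ContinuousLinearMap.coe_coe, sub_apply, rankOne_apply, hψx, hφx]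
    module
  · rw [h0, inner_zero_right, eq_comm] at hψx
    exact mul_ne_zero hμ (add_eq_zero_iff_eq_neg.not.2 hμ1) hψx

theorem hasEigenvector_rankOne_sub_rankOne_of_ne_one (hψ : ‖ψ‖ = 1) (hφ : ‖φ‖ = 1) {μ : 𝕜}
    (hμ : μ ≠ 0) (hμ1 : μ ≠ 1) (h : μ ^ 2 = 1 - (‖⟪ψ, φ⟫_𝕜‖ : 𝕜) ^ 2) :
    HasEigenvector ((rankOne 𝕜 ψ ψ - rankOne 𝕜 φ φ : E →L[𝕜] E) : End 𝕜 E) μ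
      (⟪ψ, φ⟫_𝕜 • ψ + (μ - 1) • φ) := by
  have hψx : ⟪ψ, ⟪ψ, φ⟫_𝕜 • ψ + (μ - 1) • φ⟫_𝕜 = μ * ⟪ψ, φ⟫_𝕜 := by
    simp only [inner_add_right, inner_smul_right, inner_self_eq_one_of_norm_eq_one hψ]
    ring
  have hφx : ⟪φ, ⟪ψ, φ⟫_𝕜 • ψ + (μ - 1) • φ⟫_𝕜 = -(μ * (μ - 1)) := by
    simp only [inner_add_right, inner_smul_right, inner_self_eq_one_of_norm_eq_one hφ]
    linear_combination inner_swap_mul_inner (𝕜 := 𝕜) ψ φ + h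
  refine hasEigenvector_iff.2 ⟨mem_eigenspace_iff.2 ?_, fun h0 ↦ ?_⟩
  · simp only [ContinuousLinearMap.coe_coe, sub_apply, rankOne_apply, hψx, hφx]
    module
  · rw [h0, inner_zero_right, eq_comm, neg_eq_zero] at hφx
    exact mul_ne_zero hμ (sub_ne_zero.2 hμ1) hφx

theorem hasEigenvalue_rankOne_sub_rankOne_iff_sq_eq (hψ : ‖ψ‖ = 1) (hφ : ‖φ‖ = 1) {μ : 𝕜}
    (hμ : μ ≠ 0) :
    HasEigenvalue ((rankOne 𝕜 ψ ψ - rankOne 𝕜 φ φ : E →L[𝕜] E) : End 𝕜 E) μ ↔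
      μ ^ 2 = 1 - (‖⟪ψ, φ⟫_𝕜‖ : 𝕜) ^ 2 := by
  refine ⟨fun hev ↦ ?_, fun h ↦ ?_⟩
  · obtain ⟨x, hx⟩ := hev.exists_hasEigenvector
    exact sq_eq_of_hasEigenvector_rankOne_sub_rankOne hψ hφ hx hμ
  · rcases eq_or_ne μ 1 with rfl | hμ1
    · exact hasEigenvalue_of_hasEigenvector
        (hasEigenvector_rankOne_sub_rankOne_of_ne_neg_one hψ hφ hμ (by norm_num) h)
    · exact hasEigenvalue_of_hasEigenvector
        (hasEigenvector_rankOne_sub_rankOne_of_ne_one hψ hφ hμ hμ1 h)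

theorem hasEigenvalue_rankOne_sub_rankOne_iff (hψ : ‖ψ‖ = 1) (hφ : ‖φ‖ = 1) {μ : 𝕜}
    (hμ : μ ≠ 0) :
    HasEigenvalue ((rankOne 𝕜 ψ ψ - rankOne 𝕜 φ φ : E →L[𝕜] E) : End 𝕜 E) μ ↔
      μ = (√(1 - ‖⟪ψ, φ⟫_𝕜‖ ^ 2) : 𝕜) ∨ μ = -(√(1 - ‖⟪ψ, φ⟫_𝕜‖ ^ 2) : 𝕜) := by
  have hg : ‖⟪ψ, φ⟫_𝕜‖ ≤ 1 := by simpa [hψ, hφ] using norm_inner_le_norm (𝕜 := 𝕜) ψ φ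
  have hg' : 0 ≤ 1 - ‖⟪ψ, φ⟫_𝕜‖ ^ 2 := by nlinarith [norm_nonneg ⟪ψ, φ⟫_𝕜]
  rw [hasEigenvalue_rankOne_sub_rankOne_iff_sq_eq hψ hφ hμ, ← sq_eq_sq_iff_eq_or_eq_neg,
    ← RCLike.ofReal_pow √_, Real.sq_sqrt hg', RCLike.ofReal_sub, RCLike.ofReal_one,
    RCLike.ofReal_pow]

theorem norm_rankOne_sub_rankOne [CompleteSpace E] (hψ : ‖ψ‖ = 1) (hφ : ‖φ‖ = 1) :
    ‖rankOne 𝕜 ψ ψ - rankOne 𝕜 φ φ‖ = √(1 - ‖⟪ψ, φ⟫_𝕜‖ ^ 2) :=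
  ContinuousLinearMap.norm_eq_of_hasEigenvalue_iff
    ((isCompactOperator_rankOne ψ ψ).sub (isCompactOperator_rankOne φ φ))
    (ContinuousLinearMap.isSelfAdjoint_iff_isSymmetric.2
      ((isSymmetric_rankOne_self ψ).sub (isSymmetric_rankOne_self φ)))
    (Real.sqrt_nonneg _) fun _ ↦ hasEigenvalue_rankOne_sub_rankOne_iff hψ hφ

end InnerProductSpace

/-- For unit vectors `ψ, φ` in a finite-dimensional complex Hilbert space, the
nonzero eigenvalues of `|ψ⟩⟨ψ| − |φ⟩⟨φ|` are exactly `± sin θ`, where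
`cos θ = |⟨ψ|φ⟩|` with `θ ∈ [0, π/2]`; moreover the operator norm of
`|ψ⟩⟨ψ| − |φ⟩⟨φ|` equals `sin θ`. -/
theorem eigenvalues_of_proj_sub_proj {n : ℕ}
    (ψ φ : EuclideanSpace ℂ (Fin n)) (hψ : ‖ψ‖ = 1) (hφ : ‖φ‖ = 1)
    (T : EuclideanSpace ℂ (Fin n) →L[ℂ] EuclideanSpace ℂ (Fin n))
    (hT : ∀ x, T x = (inner ℂ ψ x : ℂ) • ψ - (inner ℂ φ x : ℂ) • φ)
    (θ : ℝ) (hθ : θ = Real.arccos ‖(inner ℂ ψ φ : ℂ)‖) :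
    (∀ μ : ℂ, μ ≠ 0 →
      (Module.End.HasEigenvalue (T : EuclideanSpace ℂ (Fin n) →ₗ[ℂ] EuclideanSpace ℂ (Fin n)) μ ↔
        μ = (Real.sin θ : ℂ) ∨ μ = -(Real.sin θ : ℂ))) ∧
    ‖T‖ = Real.sin θ := by
  obtain rfl : T = rankOne ℂ ψ ψ - rankOne ℂ φ φ := by ext1 x; simp [hT]
  rw [hθ, Real.sin_arccos]
  exact ⟨fun _ ↦ hasEigenvalue_rankOne_sub_rankOne_iff hψ hφ, norm_rankOne_sub_rankOne hψ hφ⟩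
end

section
/- For 0 < ε < 1, the spherical cap on the unit sphere S^{p−1} consisting of all points within Euclidean distance ε of a fixed point x₀ ∈ S^{p−1} has area strictly less than g(ε)^{p−1}·V_{p−1}, where g(ε) = ε/√(1−ε²) and V_{p−1} is the volume of the unit (p−1)-ball. -/
/-!
A point `x` of the sphere satisfies `‖x - x₀‖ ≤ ε` iff `cos θ ≤ ⟪x₀, x⟫` with `cos θ = 1 - ε² / 2`.
The measure `toSphere` of a subset of the sphere is `p` times the volume of the cone it spans in
the unit ball, and that cone lies in the right circular cone of height `1` along `x₀` and slope
`tan θ`. By Fubini along the axis the latter has volume `tan θ ^ (p - 1) * V_{p-1} / p`, so the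
cap has area at most `tan θ ^ (p - 1) * V_{p-1}`, and
`tan θ = ε √(1 - ε² / 4) / (1 - ε² / 2) < ε / √(1 - ε²)`.
-/

open MeasureTheory Metric Set
open scoped ENNReal RealInnerProductSpace Pointwise

def truncatedCone (F : Type*) [Norm F] (a : ℝ) : Set (ℝ × F) :=
  {z | z.1 ∈ Ioo 0 1 ∧ ‖z.2‖ ≤ a * z.1}

theorem measurableSet_truncatedCone {F : Type*} [NormedAddCommGroup F] [MeasurableSpace F]
    [OpensMeasurableSpace F] (a : ℝ) : MeasurableSet (truncatedCone F a) :=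
  (measurableSet_Ioo.preimage measurable_fst).inter
    (measurableSet_le (f := fun z : ℝ × F => ‖z.2‖) (by fun_prop) (by fun_prop))

theorem lintegral_Ioo_ofReal_mul_pow {a : ℝ} (ha : 0 ≤ a) (n : ℕ) :
    ∫⁻ u in Ioo (0 : ℝ) 1, ENNReal.ofReal ((a * u) ^ n) = ENNReal.ofReal (a ^ n / (n + 1)) := by
  rw [Measure.restrict_congr_set Ioo_ae_eq_Ioc, ← ofReal_integral_eq_lintegral_ofReal,
    ← intervalIntegral.integral_of_le zero_le_one]
  · simp_rw [mul_pow]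
    rw [intervalIntegral.integral_const_mul, integral_pow]
    simp [div_eq_mul_inv]
  · exact (by fun_prop : Continuous fun u : ℝ => (a * u) ^ n).integrableOn_Ioc
  · filter_upwards [ae_restrict_mem measurableSet_Ioc] with u hu
    exact pow_nonneg (mul_nonneg ha hu.1.le) n

section TruncatedCone

variable {F : Type*} [NormedAddCommGroup F] [NormedSpace ℝ F] [MeasurableSpace F] [BorelSpace F]
  [FiniteDimensional ℝ F] (μ : Measure F) [μ.IsAddHaarMeasure] {a : ℝ}

theorem measure_prodMk_preimage_truncatedCone (ha : 0 ≤ a) (u : ℝ) :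
    μ (Prod.mk u ⁻¹' truncatedCone F a) = (Ioo 0 1).indicator
      (fun u => ENNReal.ofReal ((a * u) ^ Module.finrank ℝ F) * μ (ball 0 1)) u := by
  by_cases hu : u ∈ Ioo 0 1
  · have : Prod.mk u ⁻¹' truncatedCone F a = closedBall 0 (a * u) := by
      ext w
      simp only [truncatedCone, mem_preimage, mem_ofPred_eq, hu, true_and, mem_closedBall,
        dist_zero_right]
    rw [indicator_of_mem hu, this, μ.addHaar_closedBall _ (mul_nonneg ha hu.1.le)]
  · have : Prod.mk u ⁻¹' truncatedCone F a = ∅ := by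
      ext w
      simp only [truncatedCone, mem_preimage, mem_ofPred_eq, hu, false_and, mem_empty_iff_false]
    rw [indicator_of_notMem hu, this, measure_empty]

theorem prod_apply_truncatedCone (ha : 0 ≤ a) :
    (volume.prod μ) (truncatedCone F a)
      = ENNReal.ofReal (a ^ Module.finrank ℝ F / (Module.finrank ℝ F + 1)) * μ (ball 0 1) := by
  simp_rw [Measure.prod_apply (measurableSet_truncatedCone a),
    measure_prodMk_preimage_truncatedCone μ ha]
  rw [lintegral_indicator measurableSet_Ioo, lintegral_mul_const' _ _ measure_ball_lt_top.ne,
    lintegral_Ioo_ofReal_mul_pow ha]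

end TruncatedCone

section InnerProductSpace

variable {E : Type*} [NormedAddCommGroup E] [InnerProductSpace ℝ E]

theorem exists_orthonormalBasis_apply_eq [FiniteDimensional ℝ E] {ι : Type*} [Fintype ι]
    (hE : Module.finrank ℝ E = Fintype.card ι) (i : ι) {v : E} (hv : ‖v‖ = 1) :
    ∃ b : OrthonormalBasis ι ℝ E, b i = v := by
  have : Orthonormal ℝ (({i} : Set ι).domRestrict fun _ => v) :=
    ⟨fun _ => hv, fun {j k} hjk => (hjk (Subsingleton.elim j k)).elim⟩
  obtain ⟨b, hb⟩ := this.exists_orthonormalBasis_extension_of_card_eq hE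
  exact ⟨b, hb i rfl⟩

theorem norm_sub_le_iff_le_inner {x x₀ : sphere (0 : E) 1} {ε : ℝ} (hε : 0 ≤ ε) :
    ‖(x : E) - x₀‖ ≤ ε ↔ 1 - ε ^ 2 / 2 ≤ ⟪(x₀ : E), x⟫ := by
  rw [← pow_le_pow_iff_left₀ (norm_nonneg _) hε two_ne_zero, norm_sub_sq_real,
    norm_eq_of_mem_sphere, norm_eq_of_mem_sphere, real_inner_comm]
  constructor <;> intro h <;> linarith

theorem Ioo_smul_setOf_le_inner_subset {x₀ : E} (hx₀ : ‖x₀‖ = 1) {c : ℝ} (hc : 0 < c) :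
    Ioo (0 : ℝ) 1 • ((↑) '' {x : sphere (0 : E) 1 | c ≤ ⟪x₀, x⟫})
      ⊆ {y | ⟪x₀, y⟫ ∈ Ioo 0 1 ∧ c * ‖y‖ ≤ ⟪x₀, y⟫} := by
  rintro _ ⟨t, ⟨ht0, ht1⟩, _, ⟨x, hx, rfl⟩, rfl⟩
  have hx1 : ‖(x : E)‖ = 1 := norm_eq_of_mem_sphere x
  have hinner : ⟪x₀, (x : E)⟫ ≤ 1 := by
    simpa [hx₀, hx1] using real_inner_le_norm x₀ (x : E)
  have hcx : c ≤ ⟪x₀, (x : E)⟫ := hx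
  simp only [mem_ofPred_eq, inner_smul_right, norm_smul, hx1, Real.norm_eq_abs, abs_of_pos ht0,
    mul_one, mem_Ioo]
  exact ⟨⟨mul_pos ht0 (hc.trans_le hcx), by nlinarith⟩, by nlinarith⟩

end InnerProductSpace

namespace OrthonormalBasis

variable {E : Type*} [NormedAddCommGroup E] [InnerProductSpace ℝ E] {n : ℕ}
  (b : OrthonormalBasis (Fin (n + 1)) ℝ E)

noncomputable def headTail (y : E) : ℝ × EuclideanSpace ℝ (Fin n) :=
  (b.repr y 0, WithLp.toLp 2 fun j => b.repr y j.succ)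

theorem measurePreserving_headTail [FiniteDimensional ℝ E] [MeasurableSpace E] [BorelSpace E] :
    MeasurePreserving b.headTail :=
  (((MeasurePreserving.id volume).prod (PiLp.volume_preserving_toLp (Fin n))).comp
    ((volume_preserving_piFinSuccAbove (fun _ => ℝ) 0).comp
      ((PiLp.volume_preserving_ofLp (Fin (n + 1))).comp b.measurePreserving_repr)) :)

theorem headTail_fst (y : E) : (b.headTail y).1 = ⟪b 0, y⟫ :=
  b.repr_apply_apply y 0

theorem norm_sq_eq_headTail (y : E) :
    ‖y‖ ^ 2 = (b.headTail y).1 ^ 2 + ‖(b.headTail y).2‖ ^ 2 := by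
  rw [← b.repr.norm_map, EuclideanSpace.norm_sq_eq, EuclideanSpace.norm_sq_eq, Fin.sum_univ_succ]
  simp [headTail]

theorem setOf_mul_norm_le_inner_subset_preimage_headTail {c : ℝ} (hc0 : 0 < c) (hc1 : c ≤ 1) :
    {y | ⟪b 0, y⟫ ∈ Ioo 0 1 ∧ c * ‖y‖ ≤ ⟪b 0, y⟫}
      ⊆ b.headTail ⁻¹' truncatedCone (EuclideanSpace ℝ (Fin n)) (√(1 - c ^ 2) / c) := by
  rintro y ⟨hu, hcy⟩
  rw [← b.headTail_fst] at hu hcy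
  refine ⟨hu, ?_⟩
  set u := (b.headTail y).1
  set w := ‖(b.headTail y).2‖
  have hsq : c ^ 2 * (u ^ 2 + w ^ 2) ≤ u ^ 2 := by
    rw [← b.norm_sq_eq_headTail, ← mul_pow]
    exact pow_le_pow_left₀ (by positivity) hcy 2
  have hs : √(1 - c ^ 2) ^ 2 = 1 - c ^ 2 := Real.sq_sqrt (by nlinarith)
  rw [div_mul_eq_mul_div, le_div_iff₀ hc0,
    ← pow_le_pow_iff_left₀ (by positivity) (mul_nonneg (Real.sqrt_nonneg _) hu.1.le) two_ne_zero,
    mul_pow, mul_pow, hs]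
  linarith

end OrthonormalBasis

theorem toSphere_setOf_le_inner_le {E : Type*} [NormedAddCommGroup E] [InnerProductSpace ℝ E]
    [FiniteDimensional ℝ E] [MeasurableSpace E] [BorelSpace E] {n : ℕ}
    (hE : Module.finrank ℝ E = n + 1) {x₀ : E} (hx₀ : ‖x₀‖ = 1) {c : ℝ} (hc0 : 0 < c)
    (hc1 : c ≤ 1) :
    volume.toSphere {x : sphere (0 : E) 1 | c ≤ ⟪x₀, x⟫}
      ≤ ENNReal.ofReal ((√(1 - c ^ 2) / c) ^ n)
        * volume (ball (0 : EuclideanSpace ℝ (Fin n)) 1) := by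
  obtain ⟨b, rfl⟩ := exists_orthonormalBasis_apply_eq (hE.trans (Fintype.card_fin _).symm) 0 hx₀
  have ha : 0 ≤ √(1 - c ^ 2) / c := by positivity
  have hcone := (Ioo_smul_setOf_le_inner_subset hx₀ hc0).trans
    (b.setOf_mul_norm_le_inner_subset_preimage_headTail hc0 hc1)
  calc volume.toSphere {x : sphere (0 : E) 1 | c ≤ ⟪b 0, x⟫}
      ≤ (n + 1 : ℕ) * volume (b.headTail ⁻¹' truncatedCone _ (√(1 - c ^ 2) / c)) := by
        rw [Measure.toSphere_apply' _ (measurableSet_le measurable_const (by fun_prop)), hE]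
        gcongr
    _ = (n + 1 : ℕ) * (ENNReal.ofReal ((√(1 - c ^ 2) / c) ^ n / (n + 1))
          * volume (ball (0 : EuclideanSpace ℝ (Fin n)) 1)) := by
        rw [b.measurePreserving_headTail.measure_preimage
          (measurableSet_truncatedCone _).nullMeasurableSet, Measure.volume_eq_prod,
          prod_apply_truncatedCone _ ha, finrank_euclideanSpace_fin]
    _ = ENNReal.ofReal ((√(1 - c ^ 2) / c) ^ n)
          * volume (ball (0 : EuclideanSpace ℝ (Fin n)) 1) := by
        rw [← mul_assoc, ← ENNReal.ofReal_natCast, ← ENNReal.ofReal_mul (by positivity)]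
        push_cast
        rw [mul_div_cancel₀ _ (by positivity)]

theorem sqrt_one_sub_sq_div_lt {ε : ℝ} (hε0 : 0 < ε) (hε1 : ε < 1) :
    √(1 - (1 - ε ^ 2 / 2) ^ 2) / (1 - ε ^ 2 / 2) < ε / √(1 - ε ^ 2) := by
  have hc : 0 < 1 - ε ^ 2 / 2 := by nlinarith
  have hs : 0 < √(1 - ε ^ 2) := Real.sqrt_pos.2 (by nlinarith)
  rw [div_lt_div_iff₀ hc hs, ← Real.sqrt_mul (by nlinarith), Real.sqrt_lt' (by positivity)]
  nlinarith [pow_pos hε0 4]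

/-- For `0 < ε < 1`, the spherical cap on `S^{p−1}` of points within Euclidean
distance `ε` of a fixed point `x₀ ∈ S^{p−1}` has area strictly less than
`g(ε)^{p−1} · V_{p−1}`, where `g(ε) = ε/√(1−ε²)` and `V_{p−1}` is the volume of
the unit ball in `ℝ^{p−1}`. -/
theorem cap_area_lt (p : ℕ) (hp : 2 ≤ p) (ε : ℝ) (hε0 : 0 < ε) (hε1 : ε < 1)
    (x₀ : sphere (0 : EuclideanSpace ℝ (Fin p)) 1)
    (μs : Measure (sphere (0 : EuclideanSpace ℝ (Fin p)) 1))
    (hμs : μs = (volume : Measure (EuclideanSpace ℝ (Fin p))).toSphere)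
    (V : ℝ) (hV : V = (volume (ball (0 : EuclideanSpace ℝ (Fin (p - 1))) 1)).toReal) :
    (μs {x | ‖(x : EuclideanSpace ℝ (Fin p)) - (x₀ : EuclideanSpace ℝ (Fin p))‖ ≤ ε}).toReal
      < (ε / Real.sqrt (1 - ε ^ 2)) ^ (p - 1) * V := by
  obtain ⟨n, rfl⟩ : ∃ n, p = n + 1 := ⟨p - 1, by omega⟩
  subst hμs hV
  rw [Nat.add_sub_cancel]
  simp only [norm_sub_le_iff_le_inner hε0.le]
  have hc0 : 0 < 1 - ε ^ 2 / 2 := by nlinarith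
  have hc1 : 1 - ε ^ 2 / 2 ≤ 1 := by linarith [sq_nonneg ε]
  have hball : 0 < (volume (ball (0 : EuclideanSpace ℝ (Fin n)) 1)).toReal :=
    ENNReal.toReal_pos (measure_ball_pos _ _ one_pos).ne' measure_ball_lt_top.ne
  set c := 1 - ε ^ 2 / 2
  calc _ ≤ (ENNReal.ofReal ((√(1 - c ^ 2) / c) ^ n)
          * volume (ball (0 : EuclideanSpace ℝ (Fin n)) 1)).toReal :=
        ENNReal.toReal_mono (by finiteness) (toSphere_setOf_le_inner_le
          finrank_euclideanSpace_fin (norm_eq_of_mem_sphere x₀) hc0 hc1)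
    _ = (√(1 - c ^ 2) / c) ^ n * (volume (ball (0 : EuclideanSpace ℝ (Fin n)) 1)).toReal := by
        rw [ENNReal.toReal_mul, ENNReal.toReal_ofReal (by positivity)]
    _ < _ := mul_lt_mul_of_pos_right
        (pow_lt_pow_left₀ (sqrt_one_sub_sq_div_lt hε0 hε1) (by positivity) (by omega)) hball
end
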